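/- For 0 < q < 1, z > 0, and n ≥ 1, the difference J_{n-1}(q;z)·J_{n+1}(q;z) - (J_n(q;z))^2 equals Σ_{j=n+2}^∞ q^{(n(n-1)+(j-1)(j-2))/2} (q^{j-1} - q^n) / ((q;q)_{n+1}(q;q)_j) · z^{j+n}, and every term of this series is negative. -/

import Mathlib

open Finset Filter Topology

noncomputable def qPoch (q : ℝ) (m : ℕ) : ℝ := ∏ j ∈ Finset.range m, (1 - q ^ (j + 1))

/-- Tail of the q-exponential e(q;z) starting at index m; I_n(q;z) = qexpTail q z (n+1). -/
noncomputable def qexpTail (q z : ℝ) (m : ℕ) : ℝ := ∑' k : ℕ, z ^ (m + k) / qPoch q (m + k)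

/-- Tail of the q-exponential E(q;z) starting at index m; J_n(q;z) = qExpTail q z (n+1). -/
noncomputable def qExpTail (q z : ℝ) (m : ℕ) : ℝ :=
  ∑' k : ℕ, q ^ ((m + k) * (m + k - 1) / 2) * z ^ (m + k) / qPoch q (m + k)

/-!
Write `a j = q^(j(j-1)/2) z^j / (q;q)_j`, so that `J_{m-1} = a m + J_m`. Expanding the first
factor of `J_{n-1} J_{n+1}` and the second factor of `J_n J_n` in this way cancels `J_n J_{n+1}`
and leaves `a n · J_{n+1} - a (n+1) · J_n = ∑_k (a n · a (n+2+k) - a (n+1) · a (n+1+k))`.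
Each summand simplifies to the stated term because `(q;q)_{j+1} = (q;q)_j (1 - q^{j+1})` and
the triangular exponents satisfy `T (j+1) = T j + j`.
-/

noncomputable def qExpTerm (q z : ℝ) (j : ℕ) : ℝ := q ^ (j * (j - 1) / 2) * z ^ j / qPoch q j

section

variable {q : ℝ} (z : ℝ)

theorem qExpTail_eq_tsum (m : ℕ) : qExpTail q z m = ∑' k, qExpTerm q z (m + k) := rfl

theorem qPoch_succ (m : ℕ) : qPoch q (m + 1) = qPoch q m * (1 - q ^ (m + 1)) :=
  Finset.prod_range_succ _ _

theorem one_sub_pow_succ_pos (hq : |q| < 1) (j : ℕ) : 0 < 1 - q ^ (j + 1) := by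
  refine sub_pos.mpr ((le_abs_self _).trans_lt ?_)
  rw [abs_pow]
  exact pow_lt_one₀ (abs_nonneg q) hq j.succ_ne_zero

theorem qPoch_pos (hq : |q| < 1) (m : ℕ) : 0 < qPoch q m :=
  Finset.prod_pos fun j _ => one_sub_pow_succ_pos hq j

theorem qExpTerm_succ (hq : |q| < 1) (j : ℕ) :
    qExpTerm q z (j + 1) = qExpTerm q z j * (q ^ j * z / (1 - q ^ (j + 1))) := by
  have hP := (qPoch_pos hq j).ne'
  have hd := (one_sub_pow_succ_pos hq j).ne'
  simp only [qExpTerm, Nat.triangle_succ, qPoch_succ, pow_add, pow_one]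
  field_simp

theorem summable_qExpTerm (hq : |q| < 1) : Summable (qExpTerm q z) := by
  have hratio : Tendsto (fun j : ℕ => q ^ j * z / (1 - q ^ (j + 1))) atTop (𝓝 0) := by
    have hpow := tendsto_pow_atTop_nhds_zero_of_abs_lt_one hq
    convert (hpow.mul_const z).div ((hpow.comp (tendsto_add_atTop_nat 1)).const_sub 1)
      (by norm_num) using 2 <;> simp
  refine summable_of_ratio_norm_eventually_le (r := 1 / 2) (by norm_num) ?_
  filter_upwards [hratio.norm.eventually_le_const (by norm_num : ‖(0 : ℝ)‖ < 1 / 2)] with j hj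
  rw [qExpTerm_succ z hq, norm_mul, mul_comm]
  exact mul_le_mul_of_nonneg_right hj (norm_nonneg _)

theorem summable_qExpTerm_add (hq : |q| < 1) (m : ℕ) : Summable fun k => qExpTerm q z (m + k) :=
  (summable_qExpTerm z hq).comp_injective (add_right_injective m)

theorem qExpTail_eq_add (hq : |q| < 1) (m : ℕ) :
    qExpTail q z m = qExpTerm q z m + qExpTail q z (m + 1) := by
  rw [qExpTail_eq_tsum, (summable_qExpTerm_add z hq m).tsum_eq_zero_add]
  simp only [add_zero, qExpTail_eq_tsum, add_assoc, add_comm 1]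

theorem qExpTail_mul_sub_sq (hq : |q| < 1) (n : ℕ) :
    qExpTail q z n * qExpTail q z (n + 2) - qExpTail q z (n + 1) ^ 2 =
      ∑' k, (qExpTerm q z n * qExpTerm q z (n + 2 + k) -
        qExpTerm q z (n + 1) * qExpTerm q z (n + 1 + k)) := by
  calc _ = qExpTerm q z n * qExpTail q z (n + 2) - qExpTerm q z (n + 1) * qExpTail q z (n + 1) :=
        by rw [qExpTail_eq_add z hq n, qExpTail_eq_add z hq (n + 1)]; ring
    _ = _ := by
      rw [qExpTail_eq_tsum z (n + 2), qExpTail_eq_tsum z (n + 1), ← tsum_mul_left,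
        ← tsum_mul_left, Summable.tsum_sub ((summable_qExpTerm_add z hq _).mul_left _)
          ((summable_qExpTerm_add z hq _).mul_left _)]

theorem qExpTerm_mul_sub (hq : |q| < 1) (n k : ℕ) :
    qExpTerm q z n * qExpTerm q z (n + 2 + k) - qExpTerm q z (n + 1) * qExpTerm q z (n + 1 + k) =
      q ^ ((n * (n - 1) + (n + 1 + k) * (n + k)) / 2) * (q ^ (n + 1 + k) - q ^ n) /
        (qPoch q (n + 1) * qPoch q (n + 2 + k)) * z ^ (n + 2 + k + n) := by
  have hexp : (n * (n - 1) + (n + 1 + k) * (n + k)) / 2 =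
      n * (n - 1) / 2 + (n + 1 + k) * (n + 1 + k - 1) / 2 := by
    rw [Nat.add_div_of_dvd_right (Nat.even_mul_pred_self n).two_dvd,
      show n + 1 + k - 1 = n + k by omega]
  have hd : 1 - q * q ^ n ≠ 0 := by rw [← pow_succ']; exact (one_sub_pow_succ_pos hq n).ne'
  have hd' : 1 - q * q ^ (n + 1 + k) ≠ 0 := by
    rw [← pow_succ']; exact (one_sub_pow_succ_pos hq (n + 1 + k)).ne'
  rw [show n + 2 + k = n + 1 + k + 1 by omega, qExpTerm_succ z hq, qExpTerm_succ z hq, hexp,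
    qPoch_succ, qPoch_succ]
  simp only [qExpTerm]
  rw [pow_add q (n * (n - 1) / 2), pow_succ' q n, pow_succ' q (n + 1 + k),
    show z ^ (n + 1 + k + 1 + n) = z ^ (n + 1 + k) * z * z ^ n by ring]
  generalize q ^ (n * (n - 1) / 2) = A, q ^ ((n + 1 + k) * (n + 1 + k - 1) / 2) = B,
    z ^ n = u, z ^ (n + 1 + k) = v, q ^ n = c at *
  generalize q ^ (n + 1 + k) = d, qPoch q n = P, qPoch q (n + 1 + k) = P' at *
  have hsub : d / (1 - q * d) - c / (1 - q * c) = (d - c) / ((1 - q * d) * (1 - q * c)) := by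
    rw [div_sub_div _ _ hd' hd]; ring
  calc _ = A * u * (B * v) * z / (P * P') * (d / (1 - q * d) - c / (1 - q * c)) := by ring
    _ = _ := by rw [hsub]; generalize 1 - q * d = f, 1 - q * c = e; ring

end

theorem J_turan_difference_general (q z : ℝ) (n : ℕ) (hq0 : 0 < q) (hq1 : q < 1)
    (hz : 0 < z) :
    (qExpTail q z n * qExpTail q z (n + 2) - (qExpTail q z (n + 1)) ^ 2 =
      ∑' k : ℕ, q ^ ((n * (n - 1) + (n + 1 + k) * (n + k)) / 2) *
        (q ^ (n + 1 + k) - q ^ n) / (qPoch q (n + 1) * qPoch q (n + 2 + k)) *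
        z ^ (n + 2 + k + n)) ∧
    ∀ k : ℕ, q ^ ((n * (n - 1) + (n + 1 + k) * (n + k)) / 2) *
        (q ^ (n + 1 + k) - q ^ n) / (qPoch q (n + 1) * qPoch q (n + 2 + k)) *
        z ^ (n + 2 + k + n) < 0 := by
  have hq : |q| < 1 := abs_lt.mpr ⟨by linarith, hq1⟩
  refine ⟨?_, fun k => ?_⟩
  · rw [qExpTail_mul_sub_sq z hq]
    exact tsum_congr fun k => qExpTerm_mul_sub z hq n k
  · have hdiff : q ^ (n + 1 + k) - q ^ n < 0 :=
      sub_neg.mpr (pow_lt_pow_right_of_lt_one₀ hq0 hq1 (by omega))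
    have hnum :=
      mul_neg_of_pos_of_neg (pow_pos hq0 ((n * (n - 1) + (n + 1 + k) * (n + k)) / 2)) hdiff
    have hden := mul_pos (qPoch_pos hq (n + 1)) (qPoch_pos hq (n + 2 + k))
    exact mul_neg_of_neg_of_pos (div_neg_of_neg_of_pos hnum hden) (pow_pos hz _)

theorem J_turan_difference (q z : ℝ) (n : ℕ) (hq0 : 0 < q) (hq1 : q < 1)
    (hz : 0 < z) (hn : 1 ≤ n) :
    (qExpTail q z n * qExpTail q z (n + 2) - (qExpTail q z (n + 1)) ^ 2 =
      ∑' k : ℕ, q ^ ((n * (n - 1) + (n + 1 + k) * (n + k)) / 2) *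
        (q ^ (n + 1 + k) - q ^ n) / (qPoch q (n + 1) * qPoch q (n + 2 + k)) *
        z ^ (n + 2 + k + n)) ∧
    ∀ k : ℕ, q ^ ((n * (n - 1) + (n + 1 + k) * (n + k)) / 2) *
        (q ^ (n + 1 + k) - q ^ n) / (qPoch q (n + 1) * qPoch q (n + 2 + k)) *
        z ^ (n + 2 + k + n) < 0 :=
  J_turan_difference_general q z n hq0 hq1 hz
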